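/- arXiv:1601.05830 — 4 statements merged into one kernel-verified Lean document; each statement's English description precedes it below -/
import Mathlib

section
/- Let R be a ring with a rigid endomorphism α. If a, b ∈ R satisfy a·b = 0, then a·αⁿ(b) = 0 and αⁿ(a)·b = 0 for every natural number n ≥ 1. -/
/-!
Rigidity forces `x = 0` whenever `x ^ 2 = 0` (apply it to `x * α x` and then to `x`), so `R` is
reduced, and in a reduced ring `a * b = 0` implies `b * a = 0`. If `x * y = 0`, then
`y * α x` is annihilated by its image under `α`, so rigidity gives `y * α x = 0`, i.e.
`α x * y = 0`; symmetrically `x * α y = 0`. Iterating these one-step statements gives the theorem.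
-/

theorem IsReduced.mul_eq_zero_comm {M₀ : Type*} [MonoidWithZero M₀] [IsReduced M₀] {a b : M₀} :
    a * b = 0 ↔ b * a = 0 := by
  have key : ∀ x y : M₀, x * y = 0 → y * x = 0 := fun x y hxy ↦
    eq_zero_of_pow_eq_zero (n := 2) <| by rw [sq, mul_assoc, ← mul_assoc x, hxy, zero_mul, mul_zero]
  exact ⟨key a b, key b a⟩

namespace RingHom

variable {R : Type*} [Ring R]

def IsRigid (α : R →+* R) : Prop :=
  ∀ a : R, a * α a = 0 → a = 0

namespace IsRigid

variable {α : R →+* R}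

theorem isReduced (hα : α.IsRigid) : IsReduced R := by
  refine (isReduced_iff_pow_one_lt 2 one_lt_two).2 fun x hx ↦ hα _ (hα _ ?_)
  calc x * α x * α (x * α x) = x * α (x ^ 2) * α (α x) := by rw [map_mul, map_pow]; noncomm_ring
    _ = 0 := by rw [hx, map_zero, mul_zero, zero_mul]

theorem map_mul_eq_zero (hα : α.IsRigid) {x y : R} (hxy : x * y = 0) : α x * y = 0 := by
  have := hα.isReduced
  refine IsReduced.mul_eq_zero_comm.1 (hα _ ?_)
  calc y * α x * α (y * α x) = y * α (x * y) * α (α x) := by rw [map_mul, map_mul]; noncomm_ring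
    _ = 0 := by rw [hxy, map_zero, mul_zero, zero_mul]

theorem mul_map_eq_zero (hα : α.IsRigid) {x y : R} (hxy : x * y = 0) : x * α y = 0 := by
  have := hα.isReduced
  exact IsReduced.mul_eq_zero_comm.1 <| hα.map_mul_eq_zero <| IsReduced.mul_eq_zero_comm.1 hxy

theorem iterate_map_mul_eq_zero (hα : α.IsRigid) {x y : R} (hxy : x * y = 0) (n : ℕ) :
    α^[n] x * y = 0 := by
  induction n with
  | zero => exact hxy
  | succ n ih => rw [Function.iterate_succ_apply']; exact hα.map_mul_eq_zero ih

theorem mul_iterate_map_eq_zero (hα : α.IsRigid) {x y : R} (hxy : x * y = 0) (n : ℕ) :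
    x * α^[n] y = 0 := by
  induction n with
  | zero => exact hxy
  | succ n ih => rw [Function.iterate_succ_apply']; exact hα.mul_map_eq_zero ih

end IsRigid

end RingHom

theorem rigid_zero_prod_iterate {R : Type*} [Ring R] (α : R →+* R)
    (hrigid : ∀ a : R, a * α a = 0 → a = 0)
    (a b : R) (hab : a * b = 0) :
    ∀ n : ℕ, 1 ≤ n → a * (α^[n] b) = 0 ∧ (α^[n] a) * b = 0 := by
  have hα : α.IsRigid := hrigid
  exact fun n _ ↦ ⟨hα.mul_iterate_map_eq_zero hab n, hα.iterate_map_mul_eq_zero hab n⟩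
end

section
/- Let R be a ring with a rigid endomorphism α. If a, b ∈ R and there exists a positive integer k with a·αᵏ(b) = 0, then a·b = 0. -/
/-!
A rigid endomorphism forces `R` to be reduced: if `x² = 0` then
`(x α(x)) α(x α(x)) = x α(x²) α²(x) = 0`. In a reduced ring `ab = 0` implies `ba = 0`, so from
`a α(b) = 0` we get `(ba) α(ba) = b (a α(b)) α(a) = 0`, hence `ba = 0` and `ab = 0`: one
application of `α` can be stripped at a time.
-/

theorem mul_eq_zero_comm_of_isReduced {R : Type*} [MonoidWithZero R] [IsReduced R] {a b : R} :
    a * b = 0 ↔ b * a = 0 := by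
  suffices ∀ a b : R, a * b = 0 → b * a = 0 from ⟨this a b, this b a⟩
  intro a b h
  refine IsReduced.eq_zero _ ⟨2, ?_⟩
  rw [pow_two, mul_assoc, ← mul_assoc a, h, zero_mul, mul_zero]

def IsRigid {R F : Type*} [MulZeroClass R] [FunLike F R R] (α : F) : Prop :=
  ∀ a : R, a * α a = 0 → a = 0

namespace IsRigid

variable {R F : Type*} [MonoidWithZero R] [FunLike F R R] [MonoidWithZeroHomClass F R R] {α : F}

theorem isReduced (hα : IsRigid α) : IsReduced R := by
  refine (isReduced_iff_pow_one_lt 2 one_lt_two).2 fun x hx => hα x (hα _ ?_)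
  calc x * α x * α (x * α x) = x * α (x ^ 2) * α (α x) := by
        rw [map_mul, pow_two, map_mul, mul_assoc, mul_assoc, mul_assoc]
    _ = 0 := by rw [hx, map_zero, mul_zero, zero_mul]

theorem mul_eq_zero_of_mul_map_eq_zero (hα : IsRigid α) {a b : R} (h : a * α b = 0) :
    a * b = 0 := by
  have := hα.isReduced
  refine mul_eq_zero_comm_of_isReduced.2 (hα _ ?_)
  calc b * a * α (b * a) = b * (a * α b) * α a := by
        rw [map_mul, mul_assoc, mul_assoc, mul_assoc]
    _ = 0 := by rw [h, mul_zero, zero_mul]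

theorem mul_eq_zero_of_mul_iterate_eq_zero (hα : IsRigid α) {a b : R} (k : ℕ)
    (h : a * (⇑α)^[k] b = 0) : a * b = 0 := by
  induction k with
  | zero => exact h
  | succ k ih =>
    rw [Function.iterate_succ_apply'] at h
    exact ih (hα.mul_eq_zero_of_mul_map_eq_zero h)

end IsRigid

theorem rigid_zero_prod_of_iterate_general {R : Type*} [Ring R] (α : R →+* R)
    (hrigid : ∀ a : R, a * α a = 0 → a = 0)
    (a b : R) (k : ℕ) (h : a * (α^[k] b) = 0) :
    a * b = 0 :=
  IsRigid.mul_eq_zero_of_mul_iterate_eq_zero (α := α) hrigid k h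

theorem rigid_zero_prod_of_iterate {R : Type*} [Ring R] (α : R →+* R)
    (hrigid : ∀ a : R, a * α a = 0 → a = 0)
    (a b : R) (k : ℕ) (hk : 1 ≤ k) (h : a * (α^[k] b) = 0) :
    a * b = 0 :=
  rigid_zero_prod_of_iterate_general α hrigid a b k h
end

section
/- Let R be a domain (a nonzero ring without zero divisors, not necessarily commutative). Then R satisfies the ascending chain condition on principal left ideals if and only if for every sequence (rₙ) of nonunits of R, the intersection over all n of the right ideals r₁r₂⋯rₙR is zero. -/
/-!
A nonzero `x` lies in every `r₀ ⋯ rₙ R` exactly when it has a factorisation `x = r₀ t₀` with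
`tₙ = rₙ₊₁ tₙ₊₁` for all `n` (cancel the nonzero prefix `r₀ ⋯ rₙ`). In a domain, `tₙ = s tₙ₊₁`
with `tₙ₊₁ ≠ 0` gives `R tₙ ⊊ R tₙ₊₁` exactly when `s` is a nonunit, since domains are
Dedekind-finite. So such factorisations through nonunits are the same thing as strictly ascending
chains of principal left ideals.
-/

/-- The principal left ideal `Ra` as a set. -/
def principalLeft {R : Type*} [Ring R] (a : R) : Set R := Set.range (fun r : R => r * a)

section

variable {R : Type*} [Ring R]

@[simp]
theorem mem_principalLeft {a x : R} : x ∈ principalLeft a ↔ ∃ r, r * a = x := Iff.rfl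

theorem mem_principalLeft_self (a : R) : a ∈ principalLeft a := ⟨1, one_mul a⟩

theorem principalLeft_subset_iff {a b : R} :
    principalLeft a ⊆ principalLeft b ↔ a ∈ principalLeft b := by
  refine ⟨fun h => h (mem_principalLeft_self a), ?_⟩
  rintro ⟨s, rfl⟩ _ ⟨r, rfl⟩
  exact ⟨r * s, mul_assoc r s b⟩

theorem principalLeft_zero : principalLeft (0 : R) = {0} := by
  ext x
  simp [eq_comm]

theorem ne_zero_of_principalLeft_ssubset {a b : R} (h : principalLeft a ⊂ principalLeft b) :
    b ≠ 0 := by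
  rintro rfl
  rw [principalLeft_zero, Set.ssubset_singleton_iff] at h
  exact (Set.nonempty_of_mem (mem_principalLeft_self a)).ne_empty h

theorem principalLeft_mul_ssubset_iff [NoZeroDivisors R] {s b : R} (hb : b ≠ 0) :
    principalLeft (s * b) ⊂ principalLeft b ↔ ¬IsUnit s := by
  have hsub : principalLeft (s * b) ⊆ principalLeft b :=
    principalLeft_subset_iff.mpr ⟨s, rfl⟩
  have hsup : principalLeft b ⊆ principalLeft (s * b) ↔ ∃ u, u * s = 1 := by
    rw [principalLeft_subset_iff, mem_principalLeft]
    refine exists_congr fun u => ⟨fun h => ?_, fun h => by rw [← mul_assoc, h, one_mul]⟩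
    exact mul_right_cancel₀ hb (by rw [mul_assoc, h, one_mul])
  rw [Set.ssubset_def, hsup, isUnit_iff_exists_inv']
  exact and_iff_right hsub

theorem prod_range_mul_eq_of_forall_eq_mul {r t : ℕ → R}
    (h : ∀ n, t n = r (n + 1) * t (n + 1)) (n : ℕ) :
    ((List.range (n + 1)).map r).prod * t n = r 0 * t 0 := by
  induction n with
  | zero => simp
  | succ n ih => rw [List.prod_range_succ, mul_assoc, ← h n, ih]

theorem eq_mul_of_forall_prod_range_mul_eq [NoZeroDivisors R] {r t : ℕ → R} {x : R}
    (hx : x ≠ 0) (h : ∀ n, ((List.range (n + 1)).map r).prod * t n = x) (n : ℕ) :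
    t n = r (n + 1) * t (n + 1) := by
  have hprod : ((List.range (n + 1)).map r).prod ≠ 0 := fun h0 => hx (by rw [← h n, h0, zero_mul])
  apply mul_left_cancel₀ hprod
  rw [h n, ← mul_assoc, ← List.prod_range_succ, h (n + 1)]

end

theorem accpl_iff_archimedean_sequences {R : Type*} [Ring R] [IsDomain R] :
    (¬ ∃ a : ℕ → R, ∀ n, principalLeft (a n) ⊂ principalLeft (a (n + 1))) ↔
    (∀ r : ℕ → R, (∀ n, ¬ IsUnit (r n)) →
      (⋂ n : ℕ, Set.range (fun t : R => ((List.range (n + 1)).map r).prod * t)) = {0}) := by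
  constructor
  · intro hacc r hr
    refine Set.eq_singleton_iff_unique_mem.mpr
      ⟨Set.mem_iInter.mpr fun n => ⟨0, mul_zero _⟩, fun x hx => ?_⟩
    by_contra hx0
    have hfactor : ∀ n, ∃ t, ((List.range (n + 1)).map r).prod * t = x := Set.mem_iInter.mp hx
    choose t ht using hfactor
    have ht0 : ∀ n, t n ≠ 0 := fun n h0 => hx0 (by rw [← ht n, h0, mul_zero])
    refine hacc ⟨t, fun n => ?_⟩
    rw [eq_mul_of_forall_prod_range_mul_eq hx0 ht n, principalLeft_mul_ssubset_iff (ht0 _)]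
    exact hr _
  · rintro h ⟨a, ha⟩
    have hne : ∀ n, a (n + 1) ≠ 0 := fun n => ne_zero_of_principalLeft_ssubset (ha n)
    have hfactor : ∀ n, ∃ s, s * a (n + 1) = a n := fun n =>
      principalLeft_subset_iff.mp (ha n).subset
    choose s hs using hfactor
    have hs_nonunit : ∀ n, ¬IsUnit (s n) := fun n => by
      rw [← principalLeft_mul_ssubset_iff (hne n), hs n]
      exact ha n
    -- `a 0` may vanish, so the chain is read from `a 1 = s 1 * s 2 ⋯ sₙ₊₁ * a (n + 2)`.
    have hmem : a 1 ∈ ⋂ n : ℕ,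
        Set.range (fun t : R => ((List.range (n + 1)).map (fun k => s (k + 1))).prod * t) :=
      Set.mem_iInter.mpr fun n =>
        ⟨a (n + 2), (prod_range_mul_eq_of_forall_eq_mul (t := fun k => a (k + 2))
          (fun k => (hs (k + 2)).symm) n).trans (hs 1)⟩
    rw [h _ fun n => hs_nonunit (n + 1)] at hmem
    exact hne 0 hmem
end

section
/- Let k be a field and R = k[x₁, x₂, …]/(x₁², x₂², …), the polynomial ring in countably many commuting variables modulo the squares of the variables. Then R satisfies the ascending chain condition on principal ideals. -/
/-!
Let `R = k[x₁, x₂, …]/(xᵢ²)`. A polynomial lies in `(xᵢ²)` iff all its coefficients at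
squarefree monomials vanish, so the lowest degree of a squarefree monomial occurring in a
representative is well defined on `R`, and finite on nonzero elements. A non-unit of `R` has zero
constant term (elements with zero constant term are nilpotent), so multiplying a nonzero element
by it raises this order by at least one. Hence strict divisibility is well founded, and a strictly
ascending chain of principal ideals would give an infinite strictly decreasing sequence of
natural numbers.
-/

theorem WfDvdMonoid.of_lt_mul {α β : Type*} [CommMonoidWithZero α] [Preorder β]
    [WellFoundedLT β] (v : α → β) (hv : ∀ a x, a ≠ 0 → ¬IsUnit x → v a < v (a * x)) :
    WfDvdMonoid α :=
  ⟨Subrelation.wf (fun ⟨ha, x, hx, hb⟩ => hb ▸ hv _ x ha hx) (InvImage.wf v wellFounded_lt)⟩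

theorem WfDvdMonoid.not_forall_span_singleton_lt {α : Type*} [CommSemiring α] [WfDvdMonoid α]
    (f : ℕ → α) : ¬ ∀ n, Ideal.span {f n} < Ideal.span {f (n + 1)} := by
  intro hf
  obtain ⟨n, hn⟩ := WellFounded.not_rel_apply_succ (r := DvdNotUnit) f
  simp only [lt_iff_le_not_ge, Ideal.span_singleton_le_span_singleton] at hf
  exact hn (dvdNotUnit_of_dvd_of_not_dvd (hf n).1 (hf n).2)

namespace MvPolynomial

variable (σ R : Type*) [CommSemiring R]

noncomputable abbrev idealOfVarSquares : Ideal (MvPolynomial σ R) :=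
  .span (.range fun i => X i ^ 2)

variable {σ R}

theorem mem_idealOfVarSquares_iff {p : MvPolynomial σ R} :
    p ∈ idealOfVarSquares σ R ↔ ∀ d : σ →₀ ℕ, (∀ i, d i ≤ 1) → coeff d p = 0 := by
  have : (Set.range fun i => (X i : MvPolynomial σ R) ^ 2) =
      (monomial · 1) '' Set.range fun i => Finsupp.single i 2 := by
    simp only [X_pow_eq_monomial, ← Set.range_comp]; rfl
  rw [idealOfVarSquares, this, mem_ideal_span_monomial_image]
  simp only [Set.exists_range_iff, Finsupp.single_le_iff, mem_support_iff]
  exact forall_congr' fun d => by grind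

noncomputable def squarefreeOrder (p : MvPolynomial σ R) : ℕ∞ :=
  ⨅ (d : σ →₀ ℕ) (_ : ∀ i, d i ≤ 1) (_ : coeff d p ≠ 0), (d.degree : ℕ∞)

theorem squarefreeOrder_congr {p q : MvPolynomial σ R}
    (h : ∀ d : σ →₀ ℕ, (∀ i, d i ≤ 1) → coeff d p = coeff d q) :
    squarefreeOrder p = squarefreeOrder q :=
  iInf_congr fun d => iInf_congr fun hd => by rw [h d hd]

theorem squarefreeOrder_lt_top {p : MvPolynomial σ R} (hp : p ∉ idealOfVarSquares σ R) :
    squarefreeOrder p < ⊤ := by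
  rw [mem_idealOfVarSquares_iff] at hp
  push Not at hp
  obtain ⟨d, hd, hne⟩ := hp
  exact (iInf₂_le_of_le d hd (iInf_le _ hne)).trans_lt (ENat.natCast_lt_top _)

theorem squarefreeOrder_add_one_le_mul (p : MvPolynomial σ R) {r : MvPolynomial σ R}
    (hr : constantCoeff r = 0) : squarefreeOrder p + 1 ≤ squarefreeOrder (p * r) := by
  classical
  refine le_iInf₂ fun d hd => le_iInf fun hne => ?_
  obtain ⟨⟨d₁, d₂⟩, hd₁₂, hcoeff⟩ :=
    Finset.exists_ne_zero_of_sum_ne_zero (coeff_mul p r d ▸ hne)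
  rw [Finset.HasAntidiagonal.mem_antidiagonal] at hd₁₂
  subst hd₁₂
  have h₁ : squarefreeOrder p ≤ d₁.degree :=
    iInf₂_le_of_le d₁ (fun i => (Nat.le_add_right _ _).trans (hd i))
      (iInf_le _ (left_ne_zero_of_mul hcoeff))
  have h₂ : 1 ≤ d₂.degree := by
    refine Nat.one_le_iff_ne_zero.2 fun h => right_ne_zero_of_mul hcoeff ?_
    rwa [(Finsupp.degree_eq_zero_iff d₂).1 h, ← constantCoeff_eq]
  calc squarefreeOrder p + 1 ≤ d₁.degree + d₂.degree := add_le_add h₁ (by exact_mod_cast h₂)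
    _ = (d₁ + d₂).degree := by rw [map_add]; push_cast; rfl

section CommRing

variable {R : Type*} [CommRing R]

theorem isNilpotent_mk_of_constantCoeff_eq_zero {p : MvPolynomial σ R}
    (hp : constantCoeff p = 0) : IsNilpotent (Ideal.Quotient.mk (idealOfVarSquares σ R) p) := by
  have hp' : p ∈ idealOfVars σ R := by
    rw [← pow_one (idealOfVars σ R), mem_pow_idealOfVars_iff']
    intro d hd
    rwa [(Finsupp.degree_eq_zero_iff d).1 (Nat.lt_one_iff.1 hd), ← constantCoeff_eq]
  have : (idealOfVars σ R).map (Ideal.Quotient.mk (idealOfVarSquares σ R)) ≤ nilradical _ := by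
    rw [Ideal.map_span, Ideal.span_le]
    rintro _ ⟨_, ⟨i, rfl⟩, rfl⟩
    refine mem_nilradical.2 ⟨2, ?_⟩
    rw [← map_pow, Ideal.Quotient.eq_zero_iff_mem]
    exact Ideal.subset_span ⟨i, rfl⟩
  exact this (Ideal.mem_map_of_mem _ hp')

theorem isUnit_mk_of_isUnit_constantCoeff {p : MvPolynomial σ R}
    (hp : IsUnit (constantCoeff p)) : IsUnit (Ideal.Quotient.mk (idealOfVarSquares σ R) p) := by
  have hnil := isNilpotent_mk_of_constantCoeff_eq_zero (p := p - C (constantCoeff p)) (by simp)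
  have hu := (hp.map C).map (Ideal.Quotient.mk (idealOfVarSquares σ R))
  simpa using hnil.isUnit_add_left_of_commute hu (Commute.all _ _)

noncomputable def quotSquarefreeOrder : MvPolynomial σ R ⧸ idealOfVarSquares σ R → ℕ∞ :=
  Quotient.lift squarefreeOrder fun p q h => squarefreeOrder_congr fun d hd => by
    have := mem_idealOfVarSquares_iff.1 ((Submodule.quotientRel_def _).1 h) d hd
    rwa [MvPolynomial.coeff_sub, sub_eq_zero] at this

theorem quotSquarefreeOrder_mk (p : MvPolynomial σ R) :
    quotSquarefreeOrder (Ideal.Quotient.mk (idealOfVarSquares σ R) p) = squarefreeOrder p :=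
  rfl

end CommRing

theorem quotSquarefreeOrder_lt_mul {k : Type*} [Field k]
    {a x : MvPolynomial σ k ⧸ idealOfVarSquares σ k} (ha : a ≠ 0) (hx : ¬IsUnit x) :
    quotSquarefreeOrder a < quotSquarefreeOrder (a * x) := by
  obtain ⟨p, rfl⟩ := Ideal.Quotient.mk_surjective a
  obtain ⟨r, rfl⟩ := Ideal.Quotient.mk_surjective x
  have hr : constantCoeff r = 0 := by
    by_contra h
    exact hx (isUnit_mk_of_isUnit_constantCoeff (Ne.isUnit h))
  have hp := squarefreeOrder_lt_top fun hp => ha (Ideal.Quotient.eq_zero_iff_mem.2 hp)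
  rw [← map_mul, quotSquarefreeOrder_mk, quotSquarefreeOrder_mk]
  exact ((ENat.lt_add_one_iff' hp.ne).2 le_rfl).trans_le (squarefreeOrder_add_one_le_mul p hr)

instance {k : Type*} [Field k] : WfDvdMonoid (MvPolynomial σ k ⧸ idealOfVarSquares σ k) :=
  .of_lt_mul quotSquarefreeOrder fun _ _ => quotSquarefreeOrder_lt_mul

end MvPolynomial

theorem quotient_squares_accp (k : Type*) [Field k] :
    ¬ ∃ f : ℕ → (MvPolynomial ℕ k ⧸
        Ideal.span (Set.range fun i : ℕ => (MvPolynomial.X i : MvPolynomial ℕ k) ^ 2)),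
      ∀ n, Ideal.span {f n} < Ideal.span {f (n + 1)} :=
  fun ⟨f, hf⟩ => WfDvdMonoid.not_forall_span_singleton_lt f hf
end
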